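/- arXiv:1704.04645 — 5 statements merged into one kernel-verified Lean document; each statement's English description precedes it below -/
import Mathlib

section
/- For the map T x = (2/3)·x·sin(1/x) (T 0 = 0) on [-1,1], with x = 2/π and z = 2/(3π), one has |T x - T z|² = 256/(81π²) while |x - z|² + |(x - T x) - (z - T z)|² = 160/(81π²); hence T is not 1-strictly pseudocontractive at these points. -/
theorem stmt4 (T : ℝ → ℝ)
    (hT : ∀ x : ℝ, x ≠ 0 → T x = (2 / 3) * x * Real.sin (1 / x))
    (hT0 : T 0 = 0)
    (x z : ℝ) (hx : x = 2 / Real.pi) (hz : z = 2 / (3 * Real.pi)) :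
    |T x - T z| ^ 2 = 256 / (81 * Real.pi ^ 2) ∧
    |x - z| ^ 2 + |(x - T x) - (z - T z)| ^ 2 = 160 / (81 * Real.pi ^ 2) ∧
    ¬ (|T x - T z| ^ 2 ≤ |x - z| ^ 2 + |(x - T x) - (z - T z)| ^ 2) := by
  have hpi : Real.pi ≠ 0 := Real.pi_ne_zero
  have hpi2 : (0:ℝ) < Real.pi ^ 2 := by positivity
  have hxne : x ≠ 0 := by rw [hx]; positivity
  have hzne : z ≠ 0 := by
    rw [hz]; positivity
  have h1x : 1 / x = Real.pi / 2 := by rw [hx]; field_simp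
  have h1z : 1 / z = 3 * Real.pi / 2 := by rw [hz]; field_simp
  have hs1 : Real.sin (1 / x) = 1 := by rw [h1x, Real.sin_pi_div_two]
  have hs2 : Real.sin (1 / z) = -1 := by
    rw [h1z]
    have : 3 * Real.pi / 2 = Real.pi + Real.pi / 2 := by ring
    rw [this, Real.sin_add, Real.sin_pi, Real.cos_pi, Real.sin_pi_div_two]
    ring
  have hTx : T x = 4 / (3 * Real.pi) := by
    rw [hT x hxne, hs1, hx]; ring
  have hTz : T z = -(4 / (9 * Real.pi)) := by
    rw [hT z hzne, hs2, hz]; ring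
  have e1 : |T x - T z| ^ 2 = 256 / (81 * Real.pi ^ 2) := by
    rw [sq_abs, hTx, hTz]
    field_simp; ring
  have e2 : |x - z| ^ 2 + |(x - T x) - (z - T z)| ^ 2 = 160 / (81 * Real.pi ^ 2) := by
    rw [sq_abs, sq_abs, hTx, hTz, hx, hz]
    field_simp; ring
  refine ⟨e1, e2, ?_⟩
  rw [e1, e2]
  intro h
  have := (div_le_div_iff_of_pos_right (by positivity)).mp h
  linarith
end

section
/- Let {a_n}, {z_n}, {y_n} be sequences of nonnegative reals with a_{n+1} ≤ (1 + z_n)·a_n + y_n for all n. If ∑ z_n < ∞ and ∑ y_n < ∞, then lim_{n→∞} a_n exists. -/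
open Filter Finset

/-!
Dividing by the partial products `P n = ∏ k < n, (1 + z k)` turns the recursion into
`a (n+1) / P (n+1) ≤ a n / P n + y n / P (n+1)`. Since `P ≥ 1`, the error terms are summable, and a
sequence that is bounded below and decreases up to summable errors converges; so `a / P` converges.
The partial products converge because `∑ z` does, hence so does `a = (a / P) * P`.
-/

theorem exists_tendsto_of_le_add_of_summable {b w : ℕ → ℝ} (hb : BddBelow (Set.range b))
    (hw : Summable w) (h : ∀ n, b (n + 1) ≤ b n + w n) : ∃ l, Tendsto b atTop (nhds l) := by
  set S : ℕ → ℝ := fun n => ∑ k ∈ range n, w k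
  have hS : Tendsto S atTop (nhds (∑' k, w k)) := hw.hasSum.tendsto_sum_nat
  have hanti : Antitone (b - S) := by
    refine antitone_nat_of_succ_le fun n => ?_
    simp only [Pi.sub_apply, S, sum_range_succ]
    linarith [h n]
  have hbdd : BddBelow (Set.range (b - S)) := by
    obtain ⟨m, hm⟩ := hb
    obtain ⟨M, hM⟩ := hS.bddAbove_range
    refine ⟨m - M, ?_⟩
    rintro _ ⟨n, rfl⟩
    linarith [hm ⟨n, rfl⟩, hM ⟨n, rfl⟩, show (b - S) n = b n - S n from rfl]
  exact ⟨_, by simpa using (tendsto_atTop_ciInf hanti hbdd).add hS⟩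

section WeightedRecursion

variable {a z y : ℕ → ℝ}

theorem one_le_prod_range_one_add (hz : ∀ n, 0 ≤ z n) (n : ℕ) :
    1 ≤ ∏ k ∈ range n, (1 + z k) :=
  Finset.one_le_prod fun k _ => le_add_of_nonneg_right (hz k)

theorem div_prod_range_succ_le (hz : ∀ n, 0 ≤ z n)
    (h : ∀ n, a (n + 1) ≤ (1 + z n) * a n + y n) (n : ℕ) :
    a (n + 1) / ∏ k ∈ range (n + 1), (1 + z k) ≤
      a n / ∏ k ∈ range n, (1 + z k) + y n / ∏ k ∈ range (n + 1), (1 + z k) := by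
  set P := ∏ k ∈ range n, (1 + z k)
  have hP : 0 < P := (one_le_prod_range_one_add hz n).trans_lt' one_pos
  have hz1 : 0 < 1 + z n := by linarith [hz n]
  rw [prod_range_succ]
  calc a (n + 1) / (P * (1 + z n)) ≤ ((1 + z n) * a n + y n) / (P * (1 + z n)) := by
        gcongr
        exact h n
    _ = a n / P + y n / (P * (1 + z n)) := by field_simp

end WeightedRecursion

theorem stmt9_general (a z y : ℕ → ℝ)
    (ha : ∀ n, 0 ≤ a n) (hz : ∀ n, 0 ≤ z n)
    (h : ∀ n, a (n + 1) ≤ (1 + z n) * a n + y n)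
    (hzs : Summable z) (hys : Summable y) :
    ∃ l : ℝ, Tendsto a atTop (nhds l) := by
  set P : ℕ → ℝ := fun n => ∏ k ∈ range n, (1 + z k)
  have hP1 : ∀ n, 1 ≤ P n := one_le_prod_range_one_add hz
  have hPpos : ∀ n, 0 < P n := fun n => (hP1 n).trans_lt' one_pos
  have hPlim : Tendsto P atTop (nhds (∏' k, (1 + z k))) :=
    (Real.multipliable_one_add_of_summable hzs).hasProd.tendsto_prod_nat
  have herr : Summable fun n => y n / P (n + 1) :=
    hys.abs.of_norm_bounded fun n => by
      rw [Real.norm_eq_abs, abs_div, abs_of_pos (hPpos _)]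
      exact div_le_self (abs_nonneg _) (hP1 _)
  obtain ⟨l, hl⟩ := exists_tendsto_of_le_add_of_summable
    ⟨0, by rintro _ ⟨n, rfl⟩; exact div_nonneg (ha n) (hPpos n).le⟩ herr
    (div_prod_range_succ_le hz h)
  refine ⟨l * ∏' k, (1 + z k), (hl.mul hPlim).congr fun n => ?_⟩
  exact div_mul_cancel₀ _ (hPpos n).ne'

theorem stmt9 (a z y : ℕ → ℝ)
    (ha : ∀ n, 0 ≤ a n) (hz : ∀ n, 0 ≤ z n) (hy : ∀ n, 0 ≤ y n)
    (h : ∀ n, a (n + 1) ≤ (1 + z n) * a n + y n)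
    (hzs : Summable z) (hys : Summable y) :
    ∃ l : ℝ, Tendsto a atTop (nhds l) :=
  stmt9_general a z y ha hz h hzs hys
end

section
/- Let {a_n} be a sequence of nonnegative reals with a_{n+1} ≤ (1 - γ_n)·a_n + σ_n, where γ_n ∈ (0,1), lim γ_n = 0, ∑ γ_n = ∞, and ∑ |σ_n| < ∞. Then lim_{n→∞} a_n = 0. -/
open Filter Finset

theorem stmt10 (a γ σ : ℕ → ℝ)
    (ha : ∀ n, 0 ≤ a n) (hγ : ∀ n, γ n ∈ Set.Ioo (0 : ℝ) 1)
    (h : ∀ n, a (n + 1) ≤ (1 - γ n) * a n + σ n)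
    (hγ0 : Tendsto γ atTop (nhds 0))
    (hγs : ¬ Summable γ)
    (hσ : Summable fun n => |σ n|) :
    Tendsto a atTop (nhds 0) := by
  have key : ∀ N k, a (N + k) ≤
      Real.exp (-(∑ j ∈ range k, γ (N + j))) * a N + ∑ j ∈ range k, |σ (N + j)| := by
    intro N k
    induction k with
    | zero => simp
    | succ k ih =>
      have hγN := hγ (N + k)
      have hσsum : (0:ℝ) ≤ ∑ j ∈ range k, |σ (N + j)| :=
        Finset.sum_nonneg fun j _ => abs_nonneg _
      have h1 : (1 - γ (N + k)) ≤ Real.exp (-(γ (N + k))) := by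
        have := Real.add_one_le_exp (-(γ (N + k)))
        linarith
      calc a (N + (k + 1)) = a ((N + k) + 1) := by ring_nf
        _ ≤ (1 - γ (N + k)) * a (N + k) + σ (N + k) := h _
        _ ≤ (1 - γ (N + k)) * (Real.exp (-(∑ j ∈ range k, γ (N + j))) * a N
              + ∑ j ∈ range k, |σ (N + j)|) + |σ (N + k)| := by
            gcongr
            · linarith [hγN.2]
            · exact le_abs_self _
        _ = ((1 - γ (N + k)) * Real.exp (-(∑ j ∈ range k, γ (N + j)))) * a N
              + ((1 - γ (N + k)) * (∑ j ∈ range k, |σ (N + j)|) + |σ (N + k)|) := by ring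
        _ ≤ (Real.exp (-(γ (N + k))) * Real.exp (-(∑ j ∈ range k, γ (N + j)))) * a N
              + ((∑ j ∈ range k, |σ (N + j)|) + |σ (N + k)|) := by
            refine add_le_add (mul_le_mul_of_nonneg_right
              (mul_le_mul_of_nonneg_right h1 (Real.exp_pos _).le) (ha N))
              (add_le_add ?_ le_rfl)
            nlinarith [hγN.1, hγN.2]
        _ = Real.exp (-(∑ j ∈ range (k + 1), γ (N + j))) * a N
              + ∑ j ∈ range (k + 1), |σ (N + j)| := by
            rw [Finset.sum_range_succ, Finset.sum_range_succ, ← Real.exp_add,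
              show -γ (N + k) + -∑ j ∈ range k, γ (N + j)
                  = -(∑ j ∈ range k, γ (N + j) + γ (N + k)) from by ring]
  rw [Metric.tendsto_atTop]
  intro ε hε
  have htail : Tendsto (fun N => ∑' j, |σ (N + j)|) atTop (nhds 0) := by
    simpa [add_comm] using tendsto_sum_nat_add (fun n => |σ n|)
  obtain ⟨N, hN⟩ : ∃ N, ∑' j, |σ (N + j)| < ε / 2 := by
    have := (htail.eventually (eventually_lt_nhds (by linarith : (0:ℝ) < ε/2))).exists
    simpa using this
  have hσN : Summable fun j => |σ (N + j)| := by
    have := (summable_nat_add_iff N).mpr hσ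
    simpa [add_comm] using this
  have hns : ¬ Summable (fun j => γ (N + j)) := by
    intro hs
    exact hγs ((summable_nat_add_iff N).mp (by simpa [add_comm] using hs))
  have hPtop : Tendsto (fun k => ∑ j ∈ range k, γ (N + j)) atTop atTop :=
    (not_summable_iff_tendsto_nat_atTop_of_nonneg (fun j => (hγ _).1.le)).mp hns
  have hexp : Tendsto (fun k => Real.exp (-(∑ j ∈ range k, γ (N + j))) * a N)
      atTop (nhds 0) := by
    have h1 : Tendsto (fun k => Real.exp (-(∑ j ∈ range k, γ (N + j)))) atTop (nhds 0) :=
      Real.tendsto_exp_atBot.comp (tendsto_neg_atBot_iff.mpr hPtop)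
    simpa using h1.mul_const (a N)
  obtain ⟨K, hK⟩ : ∃ K, ∀ k ≥ K, Real.exp (-(∑ j ∈ range k, γ (N + j))) * a N < ε / 2 := by
    have := (hexp.eventually (eventually_lt_nhds (by linarith : (0:ℝ) < ε/2)))
    exact this.exists_forall_of_atTop
  refine ⟨N + K, fun n hn => ?_⟩
  obtain ⟨k, rfl⟩ : ∃ k, n = N + k := ⟨n - N, by omega⟩
  have hk : k ≥ K := by omega
  have hsum : ∑ j ∈ range k, |σ (N + j)| ≤ ∑' j, |σ (N + j)| :=
    Summable.sum_le_tsum _ (fun j _ => abs_nonneg _) hσN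
  have := key N k
  rw [Real.dist_eq, sub_zero, abs_of_nonneg (ha _)]
  calc a (N + k) ≤ _ := this
    _ < ε / 2 + ε / 2 := by
        have := hK k hk
        linarith [hsum, hN]
    _ = ε := by ring
end

section
/- Let T₁, …, T_N be quasi-nonexpansive self-maps of a real Hilbert space H with a common fixed point p, and let α₁, …, α_N ∈ (0,1) with ∑ αᵢ = 1. Then G = ∑ αᵢ·Tᵢ is quasi-nonexpansive and Fix(G) = ⋂ᵢ Fix(Tᵢ). -/
/-!
If `x` is a fixed point of `G = ∑ αᵢ Tᵢ` and `p` a common fixed point of the `Tᵢ`, then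
`x - p = ∑ αᵢ (Tᵢ x - p)` is an average of vectors no longer than itself. In a Hilbert space the
weighted variance `∑ αᵢ ‖vᵢ - v̄‖² = ∑ αᵢ ‖vᵢ‖² - ‖v̄‖²` of such an average is `≤ 0`, so
every `Tᵢ x - p` equals `x - p`, i.e. `x` is fixed by every `Tᵢ`. Once the fixed points of `G` are
known to be the common ones, quasi-nonexpansiveness of `G` is the triangle inequality.
-/

open Finset Function

section Average

variable {ι E : Type*} [NormedAddCommGroup E] [InnerProductSpace ℝ E]

theorem sum_mul_norm_sub_sum_smul_sq (s : Finset ι) (w : ι → ℝ) (v : ι → E)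
    (hw : ∑ i ∈ s, w i = 1) :
    ∑ i ∈ s, w i * ‖v i - ∑ j ∈ s, w j • v j‖ ^ 2 =
      ∑ i ∈ s, w i * ‖v i‖ ^ 2 - ‖∑ j ∈ s, w j • v j‖ ^ 2 := by
  set u := ∑ j ∈ s, w j • v j
  have hinner : ∑ i ∈ s, w i * inner ℝ (v i) u = ‖u‖ ^ 2 := by
    rw [← real_inner_self_eq_norm_sq, sum_inner]
    exact sum_congr rfl fun i _ => (real_inner_smul_left _ _ _).symm
  calc ∑ i ∈ s, w i * ‖v i - u‖ ^ 2
      = ∑ i ∈ s, w i * ‖v i‖ ^ 2 - 2 * ∑ i ∈ s, w i * inner ℝ (v i) u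
          + (∑ i ∈ s, w i) * ‖u‖ ^ 2 := by
        simp only [mul_sum, sum_mul, ← sum_sub_distrib, ← sum_add_distrib]
        exact sum_congr rfl fun i _ => by rw [norm_sub_sq_real]; ring
    _ = ∑ i ∈ s, w i * ‖v i‖ ^ 2 - ‖u‖ ^ 2 := by rw [hinner, hw]; ring

theorem eq_of_sum_smul_eq_of_norm_le {s : Finset ι} {w : ι → ℝ} {v : ι → E} {u : E}
    (hw₀ : ∀ i ∈ s, 0 < w i) (hw₁ : ∑ i ∈ s, w i = 1) (hv : ∀ i ∈ s, ‖v i‖ ≤ ‖u‖)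
    (hu : ∑ i ∈ s, w i • v i = u) : ∀ i ∈ s, v i = u := by
  have hterm_nonneg : ∀ i ∈ s, 0 ≤ w i * ‖v i - u‖ ^ 2 :=
    fun i hi => mul_nonneg (hw₀ i hi).le (sq_nonneg _)
  have hsum_nonpos : ∑ i ∈ s, w i * ‖v i - u‖ ^ 2 ≤ 0 := by
    calc ∑ i ∈ s, w i * ‖v i - u‖ ^ 2 = ∑ i ∈ s, w i * ‖v i‖ ^ 2 - ‖u‖ ^ 2 := by
          rw [← hu, sum_mul_norm_sub_sum_smul_sq s w v hw₁]
      _ ≤ ∑ i ∈ s, w i * ‖u‖ ^ 2 - ‖u‖ ^ 2 := by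
          gcongr with i hi
          · exact (hw₀ i hi).le
          · exact hv i hi
      _ = 0 := by rw [← sum_mul, hw₁, one_mul, sub_self]
  intro i hi
  have hzero := (sum_eq_zero_iff_of_nonneg hterm_nonneg).mp
    (le_antisymm hsum_nonpos (sum_nonneg hterm_nonneg)) i hi
  simpa [(hw₀ i hi).ne', sub_eq_zero] using hzero

end Average

def IsQuasiNonexpansive {E : Type*} [Norm E] [Sub E] (T : E → E) : Prop :=
  ∀ x q, IsFixedPt T q → ‖T x - q‖ ≤ ‖x - q‖

section ConvexCombination

variable {ι E : Type*} [Fintype ι] {w : ι → ℝ} {T : ι → E → E}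

theorem sum_smul_sub_of_sum_eq_one [AddCommGroup E] [Module ℝ E] (hw : ∑ i, w i = 1)
    (v : ι → E) (q : E) : ∑ i, w i • v i - q = ∑ i, w i • (v i - q) := by
  simp only [smul_sub, sum_sub_distrib, ← sum_smul, hw, one_smul]

theorem norm_sum_smul_sub_le [SeminormedAddCommGroup E] [NormedSpace ℝ E]
    (hw₀ : ∀ i, 0 ≤ w i) (hw₁ : ∑ i, w i = 1) (hT : ∀ i, IsQuasiNonexpansive (T i))
    {q : E} (hq : q ∈ ⋂ i, fixedPoints (T i)) (x : E) :
    ‖∑ i, w i • T i x - q‖ ≤ ‖x - q‖ :=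
  calc ‖∑ i, w i • T i x - q‖ = ‖∑ i, w i • (T i x - q)‖ := by
        rw [sum_smul_sub_of_sum_eq_one hw₁]
    _ ≤ ∑ i, w i * ‖T i x - q‖ := by
        refine (norm_sum_le _ _).trans_eq (sum_congr rfl fun i _ => ?_)
        rw [norm_smul, Real.norm_of_nonneg (hw₀ i)]
    _ ≤ ∑ i, w i * ‖x - q‖ := by
        gcongr with i
        · exact hw₀ i
        · exact hT i x q (Set.mem_iInter.mp hq i)
    _ = ‖x - q‖ := by rw [← sum_mul, hw₁, one_mul]

theorem fixedPoints_sum_smul_eq_iInter [NormedAddCommGroup E] [InnerProductSpace ℝ E]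
    (hw₀ : ∀ i, 0 < w i) (hw₁ : ∑ i, w i = 1) (hT : ∀ i, IsQuasiNonexpansive (T i))
    {p : E} (hp : p ∈ ⋂ i, fixedPoints (T i)) :
    fixedPoints (fun x => ∑ i, w i • T i x) = ⋂ i, fixedPoints (T i) := by
  ext x
  simp only [Set.mem_iInter, mem_fixedPoints, IsFixedPt]
  constructor
  · intro hx i
    have hshift : ∑ i, w i • (T i x - p) = x - p := by
      rw [← sum_smul_sub_of_sum_eq_one hw₁, hx]
    have hnorm : ∀ i ∈ univ, ‖T i x - p‖ ≤ ‖x - p‖ :=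
      fun i _ => hT i x p (Set.mem_iInter.mp hp i)
    simpa using eq_of_sum_smul_eq_of_norm_le (fun i _ => hw₀ i) hw₁ hnorm hshift i (mem_univ i)
  · intro hx
    simp only [hx, ← sum_smul, hw₁, one_smul]

end ConvexCombination

theorem stmt13 {H : Type*} [NormedAddCommGroup H] [InnerProductSpace ℝ H]
    (N : ℕ) (T : Fin N → H → H) (α : Fin N → ℝ)
    (hα : ∀ i, α i ∈ Set.Ioo (0 : ℝ) 1) (hαsum : ∑ i, α i = 1)
    (p : H) (hp : ∀ i, T i p = p)
    (hT : ∀ i, ∀ x q : H, T i q = q → ‖T i x - q‖ ≤ ‖x - q‖)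
    (G : H → H) (hG : ∀ x, G x = ∑ i, α i • T i x) :
    ({x : H | G x = x} = ⋂ i, {x : H | T i x = x}) ∧
    (∀ x q : H, G q = q → ‖G x - q‖ ≤ ‖x - q‖) := by
  obtain rfl : G = fun x => ∑ i, α i • T i x := funext hG
  have hfix : fixedPoints (fun x => ∑ i, α i • T i x) = ⋂ i, fixedPoints (T i) :=
    fixedPoints_sum_smul_eq_iInter (fun i => (hα i).1) hαsum hT (Set.mem_iInter.mpr hp)
  refine ⟨hfix, fun x q hq => ?_⟩
  exact norm_sum_smul_sub_le (fun i => (hα i).1.le) hαsum hT (hfix ▸ hq) x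
end

section
/- Let A : H₁ → H₂ be a bounded linear operator between real Hilbert spaces with adjoint A*, T : H₂ → H₂ a k-demicontractive map (k ∈ [0,1)) with A x* ∈ Fix(T), and x ∈ H₁ with T(Ax) ≠ Ax. Set ρ = (1-k)‖(I-T)Ax‖² / (2‖A*(I-T)Ax‖²) and u = x + ρ·A*(T(Ax) - Ax). Then ‖u - x*‖² ≤ ‖x - x*‖² - ((1-k)²/4)·‖(T - I)Ax‖⁴ / ‖A*(T - I)Ax‖². -/
/-!
Write `y = A x`, `q = A x*` and `e = T y - y`. Expanding `‖T y - q‖² = ‖e + (y - q)‖²` in the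
demicontractivity inequality gives `⟪e, y - q⟫ ≤ -a` with `a = (1-k)/2 ‖e‖²`, i.e.
`⟪x - x*, A* e⟫ ≤ -a`: the direction `A* e` makes an acute angle with `x* - x`. A step of
length `a / ‖A* e‖²` along it then decreases `‖· - x*‖²` by at least `a² / ‖A* e‖²`.
-/

open scoped RealInnerProductSpace

section

variable {E : Type*} [NormedAddCommGroup E] [InnerProductSpace ℝ E]

lemma inner_sub_le_of_norm_sub_sq_le {y z q : E} {k : ℝ}
    (h : ‖z - q‖ ^ 2 ≤ ‖y - q‖ ^ 2 + k * ‖z - y‖ ^ 2) :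
    ⟪z - y, y - q⟫ ≤ -((1 - k) / 2) * ‖z - y‖ ^ 2 := by
  have hexp : ‖z - q‖ ^ 2 = ‖z - y‖ ^ 2 + 2 * ⟪z - y, y - q⟫ + ‖y - q‖ ^ 2 := by
    rw [← norm_add_sq_real, sub_add_sub_cancel]
  linarith

lemma norm_add_div_smul_sub_sq_le {x y v : E} {a : ℝ} (ha : 0 ≤ a) (h : ⟪x - y, v⟫ ≤ -a) :
    ‖x + (a / ‖v‖ ^ 2) • v - y‖ ^ 2 ≤ ‖x - y‖ ^ 2 - a ^ 2 / ‖v‖ ^ 2 := by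
  set ρ := a / ‖v‖ ^ 2
  have hρ : 0 ≤ ρ := by positivity
  have hρv : ρ ^ 2 * ‖v‖ ^ 2 = ρ * a := by
    rcases eq_or_ne ‖v‖ 0 with hv | hv
    · simp [ρ, hv]
    · simp only [ρ]
      field_simp
  have hexp : ‖x + ρ • v - y‖ ^ 2 = ‖x - y‖ ^ 2 + 2 * (ρ * ⟪x - y, v⟫) + ρ ^ 2 * ‖v‖ ^ 2 := by
    rw [add_sub_right_comm, norm_add_sq_real, real_inner_smul_right, norm_smul,
      Real.norm_of_nonneg hρ, mul_pow]
  have hρa : ρ * a = a ^ 2 / ‖v‖ ^ 2 := by ring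
  nlinarith [mul_le_mul_of_nonneg_left h hρ]

end

theorem stmt19_general {H₁ H₂ : Type*}
    [NormedAddCommGroup H₁] [InnerProductSpace ℝ H₁] [CompleteSpace H₁]
    [NormedAddCommGroup H₂] [InnerProductSpace ℝ H₂] [CompleteSpace H₂]
    (A : H₁ →L[ℝ] H₂) (T : H₂ → H₂) (k : ℝ) (hk1 : k < 1)
    (hT : ∀ y q : H₂, T q = q → ‖T y - q‖ ^ 2 ≤ ‖y - q‖ ^ 2 + k * ‖T y - y‖ ^ 2)
    (xs : H₁) (hxs : T (A xs) = A xs)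
    (x : H₁)
    (ρ : ℝ)
    (hρ : ρ = (1 - k) * ‖A x - T (A x)‖ ^ 2 /
      (2 * ‖ContinuousLinearMap.adjoint A (A x - T (A x))‖ ^ 2))
    (u : H₁) (hu : u = x + ρ • ContinuousLinearMap.adjoint A (T (A x) - A x)) :
    ‖u - xs‖ ^ 2 ≤ ‖x - xs‖ ^ 2 -
      ((1 - k) ^ 2 / 4) * ‖T (A x) - A x‖ ^ 4 /
        ‖ContinuousLinearMap.adjoint A (T (A x) - A x)‖ ^ 2 := by
  set e := T (A x) - A x
  set v := ContinuousLinearMap.adjoint A e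
  set a := (1 - k) / 2 * ‖e‖ ^ 2
  have hacute : ⟪x - xs, v⟫ ≤ -a := by
    rw [ContinuousLinearMap.adjoint_inner_right, map_sub, real_inner_comm, neg_mul_eq_neg_mul]
    exact inner_sub_le_of_norm_sub_sq_le (hT (A x) (A xs) hxs)
  have hstep : ρ = a / ‖v‖ ^ 2 := by
    have hsub : A x - T (A x) = -e := (neg_sub _ _).symm
    rw [hρ, hsub, map_neg, norm_neg, norm_neg]
    ring
  have hdecrease : a ^ 2 / ‖v‖ ^ 2 = (1 - k) ^ 2 / 4 * ‖e‖ ^ 4 / ‖v‖ ^ 2 := by ring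
  rw [hu, hstep, ← hdecrease]
  exact norm_add_div_smul_sub_sq_le (mul_nonneg (by linarith) (sq_nonneg _)) hacute

theorem stmt19 {H₁ H₂ : Type*}
    [NormedAddCommGroup H₁] [InnerProductSpace ℝ H₁] [CompleteSpace H₁]
    [NormedAddCommGroup H₂] [InnerProductSpace ℝ H₂] [CompleteSpace H₂]
    (A : H₁ →L[ℝ] H₂) (T : H₂ → H₂) (k : ℝ) (hk0 : 0 ≤ k) (hk1 : k < 1)
    (hT : ∀ y q : H₂, T q = q → ‖T y - q‖ ^ 2 ≤ ‖y - q‖ ^ 2 + k * ‖T y - y‖ ^ 2)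
    (xs : H₁) (hxs : T (A xs) = A xs)
    (x : H₁) (hne : T (A x) ≠ A x)
    (hAne : ContinuousLinearMap.adjoint A (A x - T (A x)) ≠ 0)
    (ρ : ℝ)
    (hρ : ρ = (1 - k) * ‖A x - T (A x)‖ ^ 2 /
      (2 * ‖ContinuousLinearMap.adjoint A (A x - T (A x))‖ ^ 2))
    (u : H₁) (hu : u = x + ρ • ContinuousLinearMap.adjoint A (T (A x) - A x)) :
    ‖u - xs‖ ^ 2 ≤ ‖x - xs‖ ^ 2 -
      ((1 - k) ^ 2 / 4) * ‖T (A x) - A x‖ ^ 4 /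
        ‖ContinuousLinearMap.adjoint A (T (A x) - A x)‖ ^ 2 :=
  stmt19_general A T k hk1 hT xs hxs x ρ hρ u hu
end
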